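/- Dual inner product formula: under the above setup, for every integer vector x ∈ Z₄ (i.e. every x ∈ ℤ^c with ∂₊ᵀ · x = 0), one has λ* ∘ x = c(x) · k*, where ∘ is the standard dot product on ℤ^c. -/

import Mathlib

open Matrix

/-- determinant of the square submatrix of `M` formed by the columns indexed by `I`
(in increasing order); junk value `0` if `I` does not have exactly `n` elements. -/
noncomputable def colsDet {n c : ℕ} (M : Matrix (Fin n) (Fin c) ℤ) (I : Finset (Fin c)) : ℤ :=
  if h : I.card = n then
    (M.submatrix id fun t => ((I.orderIsoOfFin h t : Fin c))).det
  else 0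

/-- the (co)cycle `C_I` attached to an `(n+1)`-element subset `I = {i₀ < … < i_n}` of
column indices of `D`: its `i_j`-th entry is `(−1)^j · det(D restricted to the columns
I ∖ {i_j})` and its entries outside `I` vanish (junk value `0` if `I.card ≠ n+1`). -/
noncomputable def cyc {n c : ℕ} (D : Matrix (Fin n) (Fin c) ℤ) (I : Finset (Fin c)) :
    Fin c → ℤ := fun e =>
  if h : I.card = n + 1 ∧ e ∈ I then
    (-1) ^ ((((I.orderIsoOfFin h.1).symm ⟨e, h.2⟩ : Fin (n + 1)) : ℕ)) *
      colsDet D (I.erase e)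
  else 0

/-- determinant of the square matrix whose first column is the coordinate vector of `z`
in the basis `Z'` of `ker B` and whose remaining columns are the coordinate vectors of
the kernel elements `cols`.  With `B = ∂₊ᵀ` and `cols` the columns of `∂ᵀ` indexed by
`K`, this is the cutting number `c(z)`. -/
noncomputable def detCoord {b c r : ℕ} {B : Matrix (Fin b) (Fin c) ℤ}
    (Z' : Module.Basis (Fin (r + 1)) ℤ (LinearMap.ker B.mulVecLin))
    (cols : Fin r → LinearMap.ker B.mulVecLin)
    (z : LinearMap.ker B.mulVecLin) : ℤ :=
  (Matrix.of fun i j =>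
    Fin.cons (α := fun _ => ℤ) (Z'.repr z i) (fun t => Z'.repr (cols t) i) j).det

/-!
Put `D = [∂₊ᵀ]_{Z*}`; then `D x = 0`, since `∂₊ᵀ x = 0` and `Z*` is linearly independent.
Write `M_u` for `D` with the row `u` put on top. Expanding `det (M_u)_I` (columns in `I`) along
its first row gives `C*_I ⬝ᵥ u = det (M_u)_I`, so by Cauchy–Binet
`∑_I (C*_I ⬝ᵥ x) (C*_I ⬝ᵥ u) = det (M_x M_uᵀ)`. As `D x = 0`, the first row of `M_x M_uᵀ` is
`(x ⬝ᵥ u, 0, …, 0)`, so this is `(x ⬝ᵥ u) k*`. For `u = ∑_I (C*_I ⬝ᵥ x) C*_I - k* x` this gives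
`u ⬝ᵥ u = 0`, hence `∑_I (C*_I ⬝ᵥ x) C*_I = k* x` over `ℤ`, and linearity of the cutting number
gives `λ* ⬝ᵥ x = c(∑_I (C*_I ⬝ᵥ x) C*_I) = k* c(x)`.
-/

open Finset Equiv

section CauchyBinet

variable {R : Type*} [CommRing R] {m n : ℕ}

theorem Matrix.det_mul_transpose_eq_sum_fun (A B : Matrix (Fin m) (Fin n) R) :
    (A * Bᵀ).det = ∑ r : Fin m → Fin n, (∏ i, A i (r i)) * (Bᵀ.submatrix r id).det := by
  have hrows : A * Bᵀ = of fun i => ∑ j, A i j • Bᵀ j := by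
    ext i k
    simp [mul_apply]
  rw [hrows]
  change detRowAlternating.toMultilinearMap (fun i => ∑ j, A i j • Bᵀ j) = _
  rw [MultilinearMap.map_sum]
  refine sum_congr rfl fun r _ => ?_
  rw [MultilinearMap.map_smul_univ, smul_eq_mul]
  rfl

theorem Matrix.det_mul_transpose_eq_sum_injective (A B : Matrix (Fin m) (Fin n) R) :
    (A * Bᵀ).det = ∑ r ∈ univ.filter Function.Injective,
      (∏ i, A i (r i)) * (Bᵀ.submatrix r id).det := by
  rw [det_mul_transpose_eq_sum_fun]
  refine (sum_subset (filter_subset _ _) fun r _ hr => ?_).symm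
  obtain ⟨i, j, hij, hne⟩ : ∃ i j, r i = r j ∧ i ≠ j := by
    simpa [Function.Injective, and_comm] using hr
  rw [det_zero_of_row_eq hne (by ext k; simp [hij]), mul_zero]

theorem Finset.range_orderEmbOfFin_comp_perm {I : Finset (Fin n)} (h : I.card = m)
    (σ : Perm (Fin m)) : Set.range (fun i => I.orderEmbOfFin h (σ i)) = I := by
  rw [← range_orderEmbOfFin I h]
  exact σ.surjective.range_comp _

theorem sum_injective_eq_sum_sigma_perm (f : (Fin m → Fin n) → R) :
    ∑ r ∈ univ.filter Function.Injective, f r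
      = ∑ p : Σ _ : {I : Finset (Fin n) // I.card = m}, Perm (Fin m),
          f fun i => p.1.1.orderEmbOfFin p.1.2 (p.2 i) := by
  refine (sum_nbij (fun (p : Σ _ : {I : Finset (Fin n) // I.card = m}, Perm (Fin m)) i =>
      p.1.1.orderEmbOfFin p.1.2 (p.2 i)) ?_ ?_ ?_ fun _ _ => rfl).symm
  · intro p _
    exact mem_filter.mpr ⟨mem_univ _, (orderEmbOfFin _ _).injective.comp p.2.injective⟩
  · rintro ⟨⟨I, hI⟩, σ⟩ - ⟨⟨J, hJ⟩, τ⟩ - hστ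
    obtain rfl : I = J := by
      rw [← coe_inj, ← range_orderEmbOfFin_comp_perm hI σ,
        ← range_orderEmbOfFin_comp_perm hJ τ]
      exact congrArg Set.range hστ
    obtain rfl : σ = τ :=
      Equiv.ext fun i => (I.orderEmbOfFin hI).injective (congrFun hστ i)
    rfl
  · intro r hr
    have hinj : Function.Injective r := (mem_filter.mp hr).2
    set I := univ.image r
    have hI : I.card = m := by simp [I, card_image_of_injective _ hinj]
    have hmem : ∀ i, r i ∈ I := fun i => mem_image_of_mem r (mem_univ i)
    set g : Fin m → Fin m := fun i => (I.orderIsoOfFin hI).symm ⟨r i, hmem i⟩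
    have hg : ∀ i, I.orderEmbOfFin hI (g i) = r i := fun i => by
      rw [← coe_orderIsoOfFin_apply, OrderIso.apply_symm_apply]
    have hg_inj : Function.Injective g := fun i j hij => hinj (by rw [← hg, hij, hg])
    exact ⟨⟨⟨I, hI⟩, Equiv.ofBijective g hg_inj.bijective_of_finite⟩, mem_coe.mpr (mem_univ _),
      funext hg⟩

theorem colsDet_eq_det_submatrix {M : Matrix (Fin m) (Fin n) ℤ} {I : Finset (Fin n)}
    (h : I.card = m) : colsDet M I = (M.submatrix id fun t => I.orderEmbOfFin h t).det := by
  rw [colsDet, dif_pos h]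
  rfl

theorem sum_perm_prod_mul_det_submatrix (A B : Matrix (Fin m) (Fin n) ℤ)
    {I : Finset (Fin n)} (h : I.card = m) :
    ∑ σ : Perm (Fin m), (∏ i, A i (I.orderEmbOfFin h (σ i))) *
        (Bᵀ.submatrix (fun i => I.orderEmbOfFin h (σ i)) id).det
      = colsDet A I * colsDet B I := by
  have hB : (Bᵀ.submatrix (I.orderEmbOfFin h) id).det = colsDet B I := by
    rw [colsDet_eq_det_submatrix h, ← det_transpose]
    rfl
  have hA : ∑ σ : Perm (Fin m), (Perm.sign σ : ℤ) * ∏ i, A i (I.orderEmbOfFin h (σ i))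
      = colsDet A I := by
    rw [colsDet_eq_det_submatrix h, ← det_transpose, det_apply']
    rfl
  simp_rw [← hA, ← hB, sum_mul]
  refine sum_congr rfl fun σ _ => ?_
  rw [show Bᵀ.submatrix (fun i => I.orderEmbOfFin h (σ i)) id
      = (Bᵀ.submatrix (I.orderEmbOfFin h) id).submatrix σ id from rfl, det_permute]
  push_cast
  ring

theorem det_mul_transpose_eq_sum_colsDet_mul (A B : Matrix (Fin m) (Fin n) ℤ) :
    (A * Bᵀ).det = ∑ I ∈ powersetCard m univ, colsDet A I * colsDet B I := by
  rw [det_mul_transpose_eq_sum_injective, sum_injective_eq_sum_sigma_perm,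
    Fintype.sum_sigma, sum_subtype _ (p := fun I : Finset (Fin n) => I.card = m) (by simp)]
  exact Fintype.sum_congr _ _ fun I => sum_perm_prod_mul_det_submatrix A B I.2

end CauchyBinet

section Cycles

variable {n c : ℕ} (D : Matrix (Fin n) (Fin c) ℤ) {I : Finset (Fin c)}

theorem cyc_orderEmbOfFin (h : I.card = n + 1) (j : Fin (n + 1)) :
    cyc D I (I.orderEmbOfFin h j)
      = (-1) ^ (j : ℕ) * colsDet D (I.erase (I.orderEmbOfFin h j)) := by
  rw [cyc, dif_pos ⟨h, I.orderEmbOfFin_mem h j⟩]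
  congr 3
  exact (I.orderIsoOfFin h).symm_apply_apply j

theorem colsDet_erase_orderEmbOfFin (h : I.card = n + 1) (j : Fin (n + 1)) :
    colsDet D (I.erase (I.orderEmbOfFin h j))
      = (D.submatrix id fun t => I.orderEmbOfFin h (j.succAbove t)).det := by
  have hcard : (I.erase (I.orderEmbOfFin h j)).card = n := by
    rw [card_erase_of_mem (orderEmbOfFin_mem I h j), h]
    rfl
  have hmem : ∀ t, I.orderEmbOfFin h (j.succAbove t) ∈ I.erase (I.orderEmbOfFin h j) :=
    fun t => mem_erase.mpr
      ⟨(I.orderEmbOfFin h).injective.ne (j.succAbove_ne t), orderEmbOfFin_mem I h _⟩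
  rw [colsDet_eq_det_submatrix hcard, ← orderEmbOfFin_unique hcard hmem
    ((I.orderEmbOfFin h).strictMono.comp (Fin.strictMono_succAbove j))]

theorem cyc_dotProduct (h : I.card = n + 1) (u : Fin c → ℤ) :
    cyc D I ⬝ᵥ u = colsDet (of (Fin.cons u D) : Matrix (Fin (n + 1)) (Fin c) ℤ) I := by
  have hsupp : ∀ e ∈ univ, e ∉ I → cyc D I e * u e = 0 := fun e _ he => by
    rw [cyc, dif_neg fun h' => he h'.2, zero_mul]
  calc cyc D I ⬝ᵥ u = ∑ e ∈ I, cyc D I e * u e := (sum_subset (subset_univ I) hsupp).symm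
    _ = ∑ j, cyc D I (I.orderEmbOfFin h j) * u (I.orderEmbOfFin h j) := by
      have := sum_map univ (I.orderEmbOfFin h).toEmbedding fun e => cyc D I e * u e
      rwa [map_orderEmbOfFin_univ] at this
    _ = _ := by
      rw [colsDet_eq_det_submatrix h, det_succ_row_zero]
      refine Fintype.sum_congr _ _ fun j => ?_
      rw [cyc_orderEmbOfFin D h, colsDet_erase_orderEmbOfFin D h]
      change _ = (-1) ^ (j : ℕ) * u (I.orderEmbOfFin h j) *
        (D.submatrix id fun t => I.orderEmbOfFin h (j.succAbove t)).det
      ring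

end Cycles

section Gram

variable {n c : ℕ} (D : Matrix (Fin n) (Fin c) ℤ) {x : Fin c → ℤ}

theorem det_cons_mul_cons_transpose (hx : D *ᵥ x = 0) (u : Fin c → ℤ) :
    ((of (Fin.cons x D) : Matrix (Fin (n + 1)) (Fin c) ℤ) *
        (of (Fin.cons u D) : Matrix (Fin (n + 1)) (Fin c) ℤ)ᵀ).det
      = (x ⬝ᵥ u) * (D * Dᵀ).det := by
  rw [det_succ_row_zero, Fintype.sum_eq_single 0]
  · rw [Fin.val_zero, pow_zero, one_mul, Fin.succAbove_zero]
    rfl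
  · intro j hj
    obtain ⟨l, rfl⟩ := Fin.exists_succ_eq.mpr hj
    have hrow : x ⬝ᵥ D l = 0 := by
      rw [dotProduct_comm]
      exact congrFun hx l
    change (-1) ^ (l.succ : ℕ) * (x ⬝ᵥ D l) * _ = 0
    rw [hrow, mul_zero, zero_mul]

theorem sum_cyc_dotProduct_mul_cyc_dotProduct (hx : D *ᵥ x = 0) (u : Fin c → ℤ) :
    ∑ I ∈ powersetCard (n + 1) univ, (cyc D I ⬝ᵥ x) * (cyc D I ⬝ᵥ u)
      = (x ⬝ᵥ u) * (D * Dᵀ).det := by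
  rw [← det_cons_mul_cons_transpose D hx, det_mul_transpose_eq_sum_colsDet_mul]
  refine sum_congr rfl fun I hI => ?_
  rw [cyc_dotProduct D (mem_powersetCard.mp hI).2, cyc_dotProduct D (mem_powersetCard.mp hI).2]

theorem sum_cyc_dotProduct_smul_cyc (hx : D *ᵥ x = 0) :
    ∑ I ∈ powersetCard (n + 1) univ, (cyc D I ⬝ᵥ x) • cyc D I = (D * Dᵀ).det • x := by
  set S := ∑ I ∈ powersetCard (n + 1) univ, (cyc D I ⬝ᵥ x) • cyc D I
  set z := S - (D * Dᵀ).det • x with hz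
  have hSz : S ⬝ᵥ z = (x ⬝ᵥ z) * (D * Dᵀ).det := by
    simp only [S, sum_dotProduct, smul_dotProduct, smul_eq_mul]
    exact sum_cyc_dotProduct_mul_cyc_dotProduct D hx z
  rw [← sub_eq_zero, ← hz, ← dotProduct_self_eq_zero]
  nth_rw 1 [hz]
  rw [sub_dotProduct, hSz, smul_dotProduct, smul_eq_mul, mul_comm, sub_self]

end Gram

theorem Matrix.mulVec_eq_zero_of_linearIndependent {R k d c : Type*} [CommRing R] [Fintype k]
    [Fintype c] {M : Matrix d c R} {N : Matrix k c R} {v : k → d → R}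
    (hv : LinearIndependent R v) (hM : ∀ j i, M i j = ∑ l, N l j * v l i) {x : c → R}
    (hx : M *ᵥ x = 0) : N *ᵥ x = 0 := by
  have hMN : M = (of v)ᵀ * N := by
    ext i j
    rw [hM, mul_apply]
    exact sum_congr rfl fun l _ => mul_comm _ _
  rw [hMN, ← mulVec_mulVec, mulVec_transpose, vecMul_eq_sum] at hx
  exact funext (Fintype.linearIndependent_iff.mp hv _ hx)

section CuttingNumber

variable {b c r : ℕ} {B : Matrix (Fin b) (Fin c) ℤ}
  (Z' : Module.Basis (Fin (r + 1)) ℤ (LinearMap.ker B.mulVecLin))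
  (cols : Fin r → LinearMap.ker B.mulVecLin)

noncomputable def detCoordLinearMap : LinearMap.ker B.mulVecLin →ₗ[ℤ] ℤ :=
  detRowAlternating.toMultilinearMap.toLinearMap
      (Fin.cons 0 fun t => ⇑(Z'.repr (cols t))) 0 ∘ₗ Finsupp.lcoeFun ∘ₗ Z'.repr.toLinearMap

theorem detCoordLinearMap_apply (z : LinearMap.ker B.mulVecLin) :
    detCoordLinearMap Z' cols z = detCoord Z' cols z := by
  rw [detCoord, ← det_transpose]
  change det (of (Function.update (Fin.cons 0 _) 0 _)) = _
  rw [Fin.update_cons_zero]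
  congr 1
  ext i j
  refine Fin.cases ?_ (fun t => ?_) i <;> rfl

end CuttingNumber

theorem dual_inner_product_formula_general
    -- chain complex of free abelian groups around degree i
    (c d e : ℕ)
    (Bp : Matrix (Fin c) (Fin d) ℤ) (Bpp : Matrix (Fin d) (Fin e) ℤ)
    -- `Z*` is a ℤ-basis of `Z₃ = ker ∂₊₊ᵀ`, of rank n*, and `Dst = [∂₊ᵀ]_{Z*}` is the
    -- matrix of coordinates of the columns of `∂₊ᵀ` in the basis `Z*`
    (nst : ℕ) (Zst : Module.Basis (Fin nst) ℤ (LinearMap.ker Bppᵀ.mulVecLin))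
    (Dst : Matrix (Fin nst) (Fin c) ℤ)
    (hDst : ∀ j i, Bpᵀ i j = ∑ l, Dst l j * (Zst l : Fin d → ℤ) i)
    -- `Z''` is a ℤ-basis of `Z₄ = ker ∂₊ᵀ`, of rank s + 1
    (s : ℕ) (Z'' : Module.Basis (Fin (s + 1)) ℤ (LinearMap.ker Bpᵀ.mulVecLin))
    -- `K` picks s columns of `∂ᵀ` whose ℚ-span is the full column space of `∂ᵀ`;
    -- `Kcol` are these columns as elements of `Z₄`
    (Kcol : Fin s → LinearMap.ker Bpᵀ.mulVecLin)
    -- the cocycles `C*_I` as elements of `Z₄`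
    (CsI : Finset (Fin c) → LinearMap.ker Bpᵀ.mulVecLin)
    (hCsI : ∀ I, (CsI I : Fin c → ℤ) = cyc Dst I)
    -- an integer cocycle `x ∈ Z₄`
    (x : Fin c → ℤ) (hx : x ∈ LinearMap.ker Bpᵀ.mulVecLin) :
    (∑ I ∈ Finset.powersetCard (nst + 1) (Finset.univ : Finset (Fin c)),
        detCoord Z'' Kcol (CsI I) • cyc Dst I) ⬝ᵥ x
      = detCoord Z'' Kcol ⟨x, hx⟩ * (Dst * Dstᵀ).det := by
  have hDx : Dst *ᵥ x = 0 :=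
    mulVec_eq_zero_of_linearIndependent
      (Zst.linearIndependent.map' _ (Submodule.ker_subtype _)) hDst hx
  have hproj : ∑ I ∈ powersetCard (nst + 1) univ, (cyc Dst I ⬝ᵥ x) • CsI I
      = (Dst * Dstᵀ).det • (⟨x, hx⟩ : LinearMap.ker Bpᵀ.mulVecLin) := by
    ext1
    simp only [Submodule.coe_sum, Submodule.coe_smul, hCsI]
    exact sum_cyc_dotProduct_smul_cyc Dst hDx
  calc _ = detCoordLinearMap Z'' Kcol
          (∑ I ∈ powersetCard (nst + 1) univ, (cyc Dst I ⬝ᵥ x) • CsI I) := by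
        simp only [sum_dotProduct, smul_dotProduct, map_sum, map_smul, detCoordLinearMap_apply,
          smul_eq_mul, mul_comm]
    _ = detCoord Z'' Kcol ⟨x, hx⟩ * (Dst * Dstᵀ).det := by
        rw [hproj, map_smul, detCoordLinearMap_apply, smul_eq_mul, mul_comm]

/-- Dual inner product formula: `λ* ∘ x = c(x) · k*` for every integer cocycle `x ∈ Z₄`,
where `λ* = Σ_I c(C*_I) • C*_I` is the standard harmonic cocycle and
`k* = det([∂₊ᵀ]_{Z*} [∂₊ᵀ]_{Z*}ᵀ)` is the dual tree number. -/
theorem dual_inner_product_formula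
    -- chain complex of free abelian groups around degree i
    (a b c d e : ℕ) (ha : 0 < a) (hb : 0 < b) (hc : 0 < c) (hd : 0 < d) (he : 0 < e)
    (Bm : Matrix (Fin a) (Fin b) ℤ) (B : Matrix (Fin b) (Fin c) ℤ)
    (Bp : Matrix (Fin c) (Fin d) ℤ) (Bpp : Matrix (Fin d) (Fin e) ℤ)
    (h1 : Bm * B = 0) (h2 : B * Bp = 0) (h3 : Bp * Bpp = 0)
    -- `Z` is a ℤ-basis of `Z₁ = ker ∂₋`, of rank n, and `D = [∂]_Z` is the matrix of
    -- coordinates of the columns of `∂` in the basis `Z`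
    (n : ℕ) (Z : Module.Basis (Fin n) ℤ (LinearMap.ker Bm.mulVecLin))
    (D : Matrix (Fin n) (Fin c) ℤ)
    (hD : ∀ j i, B i j = ∑ l, D l j * (Z l : Fin b → ℤ) i)
    -- `Z*` is a ℤ-basis of `Z₃ = ker ∂₊₊ᵀ`, of rank n*, and `Dst = [∂₊ᵀ]_{Z*}` is the
    -- matrix of coordinates of the columns of `∂₊ᵀ` in the basis `Z*`
    (nst : ℕ) (Zst : Module.Basis (Fin nst) ℤ (LinearMap.ker Bppᵀ.mulVecLin))
    (Dst : Matrix (Fin nst) (Fin c) ℤ)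
    (hDst : ∀ j i, Bpᵀ i j = ∑ l, Dst l j * (Zst l : Fin d → ℤ) i)
    -- unicycle condition: `rk H̃_{i−1}(X) = 0`, `rk H̃_i(X) = 1`, `rk H̃_{i+1}(X) = 0`
    (hrkB : (B.map (Int.cast : ℤ → ℚ)).rank = n)
    (hker : Module.finrank ℚ (LinearMap.ker (B.map (Int.cast : ℤ → ℚ)).mulVecLin)
      = (Bp.map (Int.cast : ℤ → ℚ)).rank + 1)
    (hrkBp : (Bp.map (Int.cast : ℤ → ℚ)).rank = nst)
    -- `Z''` is a ℤ-basis of `Z₄ = ker ∂₊ᵀ`, of rank s + 1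
    (s : ℕ) (Z'' : Module.Basis (Fin (s + 1)) ℤ (LinearMap.ker Bpᵀ.mulVecLin))
    -- `K` picks s columns of `∂ᵀ` whose ℚ-span is the full column space of `∂ᵀ`;
    -- `Kcol` are these columns as elements of `Z₄`
    (K : Fin s → Fin b) (hKinj : Function.Injective K)
    (Kcol : Fin s → LinearMap.ker Bpᵀ.mulVecLin)
    (hKcol : ∀ t, (Kcol t : Fin c → ℤ) = fun i => Bᵀ i (K t))
    (hKspan : Submodule.span ℚ (Set.range fun t => fun i => (Bᵀ i (K t) : ℚ))
      = Submodule.span ℚ (Set.range fun j => fun i => (Bᵀ i j : ℚ)))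
    -- the cocycles `C*_I` as elements of `Z₄`
    (CsI : Finset (Fin c) → LinearMap.ker Bpᵀ.mulVecLin)
    (hCsI : ∀ I, (CsI I : Fin c → ℤ) = cyc Dst I)
    -- an integer cocycle `x ∈ Z₄`
    (x : Fin c → ℤ) (hx : x ∈ LinearMap.ker Bpᵀ.mulVecLin) :
    (∑ I ∈ Finset.powersetCard (nst + 1) (Finset.univ : Finset (Fin c)),
        detCoord Z'' Kcol (CsI I) • cyc Dst I) ⬝ᵥ x
      = detCoord Z'' Kcol ⟨x, hx⟩ * (Dst * Dstᵀ).det :=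
  dual_inner_product_formula_general c d e Bp Bpp nst Zst Dst hDst s Z'' Kcol CsI hCsI x hx
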